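/- Generalized Koebe non-linearity principle: Given B > 0 and τ > 0, set β = √(2B) and K_{τ,B} = β·(e^{βτ} + 1)/(e^{βτ} − 1). If φ is a C^3 diffeomorphism of an interval I ⊇ [−τ, 1+τ] into ℝ and Sφ(t) ≥ −B for all t ∈ I, then |φ''(t)/φ'(t)| ≤ K_{τ,B} for all t ∈ [0,1]. -/

import Mathlib

set_option maxHeartbeats 1000000

open Real Set

/-- Riccati comparison: if `g' ≥ g²/2 - B` on `[0, τ]`, then `g 0 ≤ β coth(βτ/2)`. -/
lemma riccati_bound (B τ : ℝ) (hB : 0 < B) (hτ : 0 < τ) (g g' : ℝ → ℝ)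
    (hg : ∀ s ∈ Set.Icc (0:ℝ) τ, HasDerivAt g (g' s) s)
    (hineq : ∀ s ∈ Set.Icc (0:ℝ) τ, (g s)^2/2 - B ≤ g' s) :
    g 0 ≤ Real.sqrt (2*B) * (Real.exp (Real.sqrt (2*B)*τ) + 1) /
      (Real.exp (Real.sqrt (2*B)*τ) - 1) := by
  by_contra hcon
  push_neg at hcon
  obtain ⟨β, hβdef⟩ : ∃ β, β = Real.sqrt (2*B) := ⟨_, rfl⟩
  rw [← hβdef] at hcon
  have hβ : 0 < β := hβdef ▸ Real.sqrt_pos.2 (by linarith)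
  have hβ2 : β^2 = 2*B := hβdef ▸ Real.sq_sqrt (by linarith)
  obtain ⟨T, hTdef⟩ : ∃ T, T = Real.exp (β*τ) := ⟨_, rfl⟩
  rw [← hTdef] at hcon
  have hT : 1 < T := by
    rw [hTdef, show (1:ℝ) = Real.exp 0 from Real.exp_zero.symm]
    exact Real.exp_lt_exp.2 (by positivity)
  have hT1 : 0 < T - 1 := by linarith
  obtain ⟨K, hKdef⟩ : ∃ K, K = β * (T+1)/(T-1) := ⟨_, rfl⟩
  rw [← hKdef] at hcon
  have hKβ : β < K := by
    rw [hKdef, lt_div_iff₀ hT1]; nlinarith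
  obtain ⟨m, hmdef⟩ : ∃ m, m = (g 0 + K)/2 := ⟨_, rfl⟩
  have hmK : K < m := by rw [hmdef]; linarith
  have hmg : m < g 0 := by rw [hmdef]; linarith
  have hmβ : 0 < m - β := by linarith
  obtain ⟨E, hEdef⟩ : ∃ E, E = (m+β)/(m-β) := ⟨_, rfl⟩
  have hE1 : 1 < E := by rw [hEdef, lt_div_iff₀ hmβ]; linarith
  have hE0 : 0 < E := by linarith
  have hET : E < T := by
    rw [hEdef, div_lt_iff₀ hmβ]
    have : β * (T+1) < m * (T-1) := by
      rw [hKdef, div_lt_iff₀ hT1] at hmK; linarith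
    nlinarith
  obtain ⟨c, hcdef⟩ : ∃ c, c = Real.log E / β := ⟨_, rfl⟩
  have hc0 : 0 < c := hcdef ▸ div_pos (Real.log_pos hE1) hβ
  have hcτ : c < τ := by
    rw [hcdef, div_lt_iff₀ hβ]
    calc Real.log E < Real.log T := Real.log_lt_log hE0 hET
    _ = β * τ := by rw [hTdef, Real.log_exp]
    _ = τ * β := by ring
  obtain ⟨ε, hεdef⟩ : ∃ ε, ε = (g 0 - m)/2 := ⟨_, rfl⟩
  have hε : 0 < ε := by rw [hεdef]; linarith
  -- the barrier
  obtain ⟨w, hwdef⟩ : ∃ w : ℝ → ℝ,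
      ∀ s, w s = β * (E + Real.exp (β*s)) / (E - Real.exp (β*s)) := ⟨_, fun _ => rfl⟩
  obtain ⟨v, hvdef⟩ : ∃ v : ℝ → ℝ, ∀ s, v s = w s + ε := ⟨_, fun _ => rfl⟩
  -- bound on g
  have hgc : ContinuousOn g (Set.Icc 0 τ) := fun s hs =>
    (hg s hs).continuousAt.continuousWithinAt
  obtain ⟨M, hM⟩ : ∃ M, ∀ s ∈ Set.Icc (0:ℝ) τ, g s ≤ M := by
    obtain ⟨M, hM⟩ := (isCompact_Icc.image_of_continuousOn hgc).bddAbove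
    exact ⟨M, fun s hs => hM ⟨s, hs, rfl⟩⟩
  -- choose d close to c
  have hMpos : 0 < |M| + 1 := by positivity
  obtain ⟨δ, hδdef⟩ : ∃ δ, δ = min ((E-1)/2) (β*E/(|M|+1)) := ⟨_, rfl⟩
  have hδ0 : 0 < δ := hδdef ▸ lt_min (by linarith) (by positivity)
  have hδE1 : δ ≤ (E-1)/2 := hδdef ▸ min_le_left _ _
  have hδM : δ ≤ β*E/(|M|+1) := hδdef ▸ min_le_right _ _
  have hEδ1 : 1 < E - δ := by linarith
  obtain ⟨d, hddef⟩ : ∃ d, d = Real.log (E - δ) / β := ⟨_, rfl⟩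
  have hd0 : 0 < d := hddef ▸ div_pos (Real.log_pos hEδ1) hβ
  have hEd : Real.exp (β*d) = E - δ := by
    rw [hddef, mul_div_cancel₀ _ (ne_of_gt hβ), Real.exp_log (by linarith)]
  have hdc : d < c := by
    rw [hddef, hcdef, div_lt_div_iff₀ hβ hβ]
    have := Real.log_lt_log (by linarith : (0:ℝ) < E - δ) (by linarith : E - δ < E)
    nlinarith
  have hdτ : d < τ := hdc.trans hcτ
  -- key positivity on [0, d]
  have hpos : ∀ s ∈ Set.Icc (0:ℝ) d, 0 < E - Real.exp (β*s) := by
    intro s hs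
    have h1 : Real.exp (β*s) ≤ E - δ := by
      rw [← hEd]
      exact Real.exp_le_exp.2 (mul_le_mul_of_nonneg_left hs.2 hβ.le)
    linarith
  have hwpos : ∀ s ∈ Set.Icc (0:ℝ) d, β < w s := by
    intro s hs
    have h1 := hpos s hs
    have h2 : 0 < Real.exp (β*s) := Real.exp_pos _
    rw [hwdef, mul_div_assoc, lt_mul_iff_one_lt_right hβ, lt_div_iff₀ h1]
    linarith
  -- derivative of the barrier
  have hvderiv : ∀ s ∈ Set.Icc (0:ℝ) d, HasDerivAt v ((w s)^2/2 - B) s := by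
    intro s hs
    have h1 := hpos s hs
    have hne : E - Real.exp (β*s) ≠ 0 := ne_of_gt h1
    have hy : HasDerivAt (fun x => Real.exp (β*x)) (β * Real.exp (β*s)) s := by
      simpa [mul_comm] using ((hasDerivAt_id s).const_mul β).exp
    have hnum : HasDerivAt (fun x => β * (E + Real.exp (β*x)))
        (β * (β * Real.exp (β*s))) s := ((hy.const_add E).const_mul β)
    have hden : HasDerivAt (fun x => E - Real.exp (β*x)) (-(β * Real.exp (β*s))) s :=
      hy.const_sub E
    have hdiv := (hnum.div hden hne).add_const ε
    have hveq : v = fun x => β * (E + Real.exp (β*x)) / (E - Real.exp (β*x)) + ε := by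
      funext x; rw [hvdef, hwdef]
    rw [hveq]
    refine hdiv.congr_deriv ?_
    have hy2 : (0:ℝ) < Real.exp (β*s) := Real.exp_pos _
    have hB2 : B = β^2/2 := by rw [hβ2]; ring
    rw [hwdef, hB2]
    field_simp
    ring
  -- comparison
  have hcomp : ∀ x ∈ Set.Icc (0:ℝ) d, v x ≤ g x := by
    refine image_le_of_deriv_right_lt_deriv_boundary'
      (f' := fun s => (w s)^2/2 - B) (B' := g') ?_ ?_ ?_ ?_ ?_ ?_
    · exact fun s hs => (hvderiv s hs).continuousAt.continuousWithinAt
    · exact fun s hs => (hvderiv s (Set.mem_Icc_of_Ico hs)).hasDerivWithinAt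
    · -- v 0 ≤ g 0
      have hE1' : E - 1 ≠ 0 := by linarith
      have h0 : w 0 = m := by
        rw [hwdef]
        simp only [mul_zero, Real.exp_zero]
        rw [div_eq_iff hE1', hEdef]
        field_simp
        ring
      rw [hvdef, h0, hεdef]
      linarith
    · exact hgc.mono (Set.Icc_subset_Icc_right hdτ.le)
    · intro s hs
      exact (hg s ⟨hs.1, hs.2.le.trans hdτ.le⟩).hasDerivWithinAt
    · intro s hs hvg
      have h1 : β < w s := hwpos s (Set.mem_Icc_of_Ico hs)
      have h2 : w s < v s := by rw [hvdef]; linarith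
      have h3 : (w s)^2 < (v s)^2 := by nlinarith
      have h4 := hineq s ⟨hs.1, (hs.2.le.trans hdτ.le)⟩
      rw [← hvg] at h4
      nlinarith
  -- contradiction at d
  have hvd : v d ≤ g d := hcomp d ⟨hd0.le, le_refl d⟩
  have hgd : g d ≤ M := hM d ⟨hd0.le, hdτ.le⟩
  have hwd : β * E / δ ≤ w d := by
    rw [hwdef, hEd, show E - (E - δ) = δ by ring]
    apply div_le_div_of_nonneg_right ?_ hδ0.le
    nlinarith
  have hbig : |M| + 1 ≤ β * E / δ := by
    rw [le_div_iff₀ hδ0]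
    have := mul_le_mul_of_nonneg_right hδM hMpos.le
    rw [div_mul_cancel₀ _ (ne_of_gt hMpos)] at this
    linarith
  have hMabs : M ≤ |M| := le_abs_self M
  have hwv : w d ≤ v d := by rw [hvdef]; linarith
  linarith




/-- The Schwarzian derivative `Sφ = φ'''/φ' − (3/2)(φ''/φ')²`. -/
noncomputable def schwarzian (f : ℝ → ℝ) (x : ℝ) : ℝ :=
  iteratedDeriv 3 f x / deriv f x - 3 / 2 * (iteratedDeriv 2 f x / deriv f x) ^ 2

/-- Generalized Koebe non-linearity principle: if `φ` is a `C³` diffeomorphism of an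
interval `I ⊇ [−τ, 1+τ]` into `ℝ` with `Sφ ≥ −B` on `I`, then for all `t ∈ [0,1]`,
`|φ''(t)/φ'(t)| ≤ K_{τ,B}` where `K_{τ,B} = β(e^{βτ}+1)/(e^{βτ}−1)`, `β = √(2B)`. -/
theorem koebe_nonlinearity (B τ : ℝ) (hB : 0 < B) (hτ : 0 < τ)
    (U : Set ℝ) (hU : IsOpen U) (hIU : Set.Icc (-τ) (1 + τ) ⊆ U)
    (φ : ℝ → ℝ) (hφ : ContDiffOn ℝ 3 φ U)
    (hφ' : ∀ x ∈ U, deriv φ x ≠ 0)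
    (hS : ∀ x ∈ U, -B ≤ schwarzian φ x) :
    ∀ t ∈ Set.Icc (0 : ℝ) 1,
      |iteratedDeriv 2 φ t / deriv φ t| ≤
        Real.sqrt (2 * B) * (Real.exp (Real.sqrt (2 * B) * τ) + 1) /
          (Real.exp (Real.sqrt (2 * B) * τ) - 1) := by
  have hi2 : iteratedDeriv 2 φ = deriv (deriv φ) := by
    have h21 : iteratedDeriv 2 φ = deriv (iteratedDeriv 1 φ) := iteratedDeriv_succ (n := 1)
    rw [h21, iteratedDeriv_one]
  have hi3 : iteratedDeriv 3 φ = deriv (deriv (deriv φ)) := by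
    have h32 : iteratedDeriv 3 φ = deriv (iteratedDeriv 2 φ) := iteratedDeriv_succ (n := 2)
    rw [h32, hi2]
  have h2 : ContDiffOn ℝ 2 (deriv φ) U := hφ.deriv_of_isOpen hU (by norm_num)
  have h1 : ContDiffOn ℝ 1 (deriv (deriv φ)) U := h2.deriv_of_isOpen hU (by norm_num)
  have hd2 : ∀ x ∈ U, HasDerivAt (deriv φ) (iteratedDeriv 2 φ x) x := by
    intro x hx
    have := ((h2.differentiableOn (by norm_num) x hx).differentiableAt
      (hU.mem_nhds hx)).hasDerivAt
    rwa [hi2]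
  have hd3 : ∀ x ∈ U, HasDerivAt (iteratedDeriv 2 φ) (iteratedDeriv 3 φ x) x := by
    intro x hx
    have := ((h1.differentiableOn (by norm_num) x hx).differentiableAt
      (hU.mem_nhds hx)).hasDerivAt
    rw [hi2, hi3]
    exact this
  -- derivative of u = φ''/φ'
  have hu : ∀ x ∈ U, HasDerivAt (fun y => iteratedDeriv 2 φ y / deriv φ y)
      (schwarzian φ x + (iteratedDeriv 2 φ x / deriv φ x)^2 / 2) x := by
    intro x hx
    have hne := hφ' x hx
    have hdiv := (hd3 x hx).div (hd2 x hx) hne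
    refine hdiv.congr_deriv ?_
    simp only [schwarzian]
    field_simp
    ring
  intro t ht
  rw [abs_le]
  constructor
  · -- lower bound via backward comparison
    have hle := riccati_bound B τ hB hτ
      (fun s => -(iteratedDeriv 2 φ (t - s) / deriv φ (t - s)))
      (fun s => schwarzian φ (t - s) + (iteratedDeriv 2 φ (t - s) / deriv φ (t - s))^2 / 2)
      (by
        intro s hs
        have hmem : t - s ∈ U := hIU ⟨by linarith [ht.1, hs.2], by linarith [ht.2, hs.1]⟩
        have hinner : HasDerivAt (fun s : ℝ => t - s) (-1) s := by
          simpa using (hasDerivAt_id s).const_sub t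
        have := ((hu (t - s) hmem).comp s hinner).neg
        exact this.congr_deriv (by ring))
      (by
        intro s hs
        have hmem : t - s ∈ U := hIU ⟨by linarith [ht.1, hs.2], by linarith [ht.2, hs.1]⟩
        have := hS (t - s) hmem
        show (-(iteratedDeriv 2 φ (t - s) / deriv φ (t - s)))^2/2 - B ≤ _
        rw [neg_sq]
        linarith)
    simp only [sub_zero] at hle
    linarith [hle]
  · -- upper bound via forward comparison
    have hle := riccati_bound B τ hB hτ
      (fun s => iteratedDeriv 2 φ (t + s) / deriv φ (t + s))
      (fun s => schwarzian φ (t + s) + (iteratedDeriv 2 φ (t + s) / deriv φ (t + s))^2 / 2)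
      (by
        intro s hs
        have hmem : t + s ∈ U := hIU ⟨by linarith [ht.1, hs.1], by linarith [ht.2, hs.2]⟩
        have hinner : HasDerivAt (fun s : ℝ => t + s) 1 s := by
          simpa using (hasDerivAt_id s).const_add t
        have := (hu (t + s) hmem).comp s hinner
        exact this.congr_deriv (by ring))
      (by
        intro s hs
        have hmem : t + s ∈ U := hIU ⟨by linarith [ht.1, hs.1], by linarith [ht.2, hs.2]⟩
        have := hS (t + s) hmem
        linarith)
    simpa using hle
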